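/- Let N ≥ 1, let c ∈ (0,1) and t₁, …, t_N ∈ ℝ, and set S_i(x) = cx + t_i. Let p = (p₁, …, p_N) and q = (q₁, …, q_N) be probability vectors with each p_i, q_i ∈ (0,1), and let μ_p and μ_q be Borel probability measures on ℝ, supported in [0,1], satisfying μ_p = Σ_{i=1}^N p_i · μ_p ∘ S_i⁻¹ and μ_q = Σ_{i=1}^N q_i · μ_q ∘ S_i⁻¹. Then the first Wasserstein distance satisfies W₁(μ_p, μ_q) ≥ |Σ_{i=1}^N (p_i − q_i) t_i| / (1 − c). -/

import Mathlib

/-!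
A coupling `γ` of `μ` and `ν` has marginal means `∫ x ∂μ` and `∫ y ∂ν`, so
`|∫ x ∂μ - ∫ y ∂ν| = |∫ (x - y) dγ| ≤ ∫ |x - y| dγ`: the difference of the means bounds `W₁`
from below. Integrating the self-similarity equation `μ = ∑ pᵢ • μ ∘ Sᵢ⁻¹` against `x` gives
`m = c m + ∑ pᵢ tᵢ` for the mean `m` of `μ`, i.e. `m = ∑ pᵢ tᵢ / (1 - c)`.
-/

open MeasureTheory

/-- The first Wasserstein distance: the infimum over couplings of μ and ν of the
first moment ∫ |x − y| dγ. -/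
noncomputable def wasserstein1 (μ ν : Measure ℝ) : ℝ :=
  sInf { a : ℝ | ∃ γ : Measure (ℝ × ℝ), IsProbabilityMeasure γ ∧
    γ.map Prod.fst = μ ∧ γ.map Prod.snd = ν ∧ a = ∫ z : ℝ × ℝ, |z.1 - z.2| ∂γ }

lemma integrable_id_of_measure_compl_Icc_eq_zero {μ : Measure ℝ} [IsFiniteMeasure μ] {a b : ℝ}
    (hμ : μ (Set.Icc a b)ᶜ = 0) : Integrable (fun x : ℝ => x) μ := by
  have hrestrict : μ.restrict (Set.Icc a b) = μ :=
    Measure.restrict_eq_self_of_ae_mem (ae_iff.mpr hμ)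
  have hIcc : IntegrableOn (fun x : ℝ => x) (Set.Icc a b) μ := continuous_id'.integrableOn_Icc
  rwa [IntegrableOn, hrestrict] at hIcc

lemma integral_id_map_affine (μ : Measure ℝ) [IsProbabilityMeasure μ]
    (hμ : Integrable (fun x : ℝ => x) μ) (c t : ℝ) :
    ∫ x, x ∂(μ.map fun x => c * x + t) = c * ∫ x, x ∂μ + t := by
  rw [integral_map (f := fun x => x) (by fun_prop) aestronglyMeasurable_id,
    integral_add (hμ.const_mul c) (integrable_const t), integral_const_mul]
  simp

lemma integral_id_eq_of_eq_sum_map_affine {ι : Type*} [Fintype ι] (μ : Measure ℝ)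
    [IsProbabilityMeasure μ] (hμ : Integrable (fun x : ℝ => x) μ) {c : ℝ} (hc : c ≠ 1)
    (t p : ι → ℝ) (hp : ∀ i, 0 ≤ p i) (hpsum : ∑ i, p i = 1)
    (hss : μ = ∑ i, ENNReal.ofReal (p i) • μ.map fun x : ℝ => c * x + t i) :
    ∫ x, x ∂μ = (∑ i, p i * t i) / (1 - c) := by
  have hint : ∀ i, Integrable (fun x : ℝ => x)
      (ENNReal.ofReal (p i) • μ.map fun x : ℝ => c * x + t i) := fun i =>
    ((integrable_map_measure aestronglyMeasurable_id (by fun_prop)).mpr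
      ((hμ.const_mul c).add (integrable_const (t i)))).smul_measure ENNReal.ofReal_ne_top
  have hfixed : ∫ x, x ∂μ = c * ∫ x, x ∂μ + ∑ i, p i * t i := by
    conv_lhs => rw [hss, integral_finsetSum_measure fun i _ => hint i]
    simp only [integral_smul_measure, integral_id_map_affine μ hμ, ENNReal.toReal_ofReal (hp _),
      smul_eq_mul, mul_add, Finset.sum_add_distrib, mul_left_comm _ c, ← Finset.mul_sum,
      ← Finset.sum_mul, hpsum, one_mul]
  rw [eq_div_iff (sub_ne_zero.mpr hc.symm)]
  linarith

lemma abs_integral_id_sub_le_wasserstein1 (μ ν : Measure ℝ) [IsProbabilityMeasure μ]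
    [IsProbabilityMeasure ν] (hμ : Integrable (fun x : ℝ => x) μ)
    (hν : Integrable (fun x : ℝ => x) ν) :
    |∫ x, x ∂μ - ∫ x, x ∂ν| ≤ wasserstein1 μ ν := by
  refine le_csInf ⟨_, μ.prod ν, inferInstance, by simp, by simp, rfl⟩ ?_
  rintro _ ⟨γ, -, hfst, hsnd, rfl⟩
  subst hfst hsnd
  have h1 : Integrable Prod.fst γ :=
    (integrable_map_measure aestronglyMeasurable_id measurable_fst.aemeasurable).mp hμ
  have h2 : Integrable Prod.snd γ :=
    (integrable_map_measure aestronglyMeasurable_id measurable_snd.aemeasurable).mp hν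
  calc |∫ x, x ∂(γ.map Prod.fst) - ∫ x, x ∂(γ.map Prod.snd)|
      = |∫ z, (z.1 - z.2) ∂γ| := by
        rw [integral_map (f := fun x => x) measurable_fst.aemeasurable aestronglyMeasurable_id,
          integral_map (f := fun x => x) measurable_snd.aemeasurable aestronglyMeasurable_id,
          integral_sub h1 h2]
    _ ≤ ∫ z, |z.1 - z.2| ∂γ := abs_integral_le_integral_abs

theorem wasserstein1_equicontractive_lower_bound_general
    (N : ℕ) (c : ℝ) (hc : c ∈ Set.Ioo (0:ℝ) 1) (t : Fin N → ℝ)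
    (p q : Fin N → ℝ)
    (hp : ∀ i, p i ∈ Set.Ioo (0:ℝ) 1) (hpsum : ∑ i, p i = 1)
    (hq : ∀ i, q i ∈ Set.Ioo (0:ℝ) 1) (hqsum : ∑ i, q i = 1)
    (μp : Measure ℝ) (hμp : IsProbabilityMeasure μp)
    (hsuppp : μp ((Set.Icc (0:ℝ) 1)ᶜ) = 0)
    (hssp : μp = ∑ i, ENNReal.ofReal (p i) • μp.map (fun x : ℝ => c * x + t i))
    (μq : Measure ℝ) (hμq : IsProbabilityMeasure μq)
    (hsuppq : μq ((Set.Icc (0:ℝ) 1)ᶜ) = 0)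
    (hssq : μq = ∑ i, ENNReal.ofReal (q i) • μq.map (fun x : ℝ => c * x + t i)) :
    wasserstein1 μp μq ≥ |∑ i, (p i - q i) * t i| / (1 - c) := by
  have hintp := integrable_id_of_measure_compl_Icc_eq_zero hsuppp
  have hintq := integrable_id_of_measure_compl_Icc_eq_zero hsuppq
  have hc1 : c ≠ 1 := hc.2.ne
  have hmeanp := integral_id_eq_of_eq_sum_map_affine μp hintp hc1 t p (fun i => (hp i).1.le)
    hpsum hssp
  have hmeanq := integral_id_eq_of_eq_sum_map_affine μq hintq hc1 t q (fun i => (hq i).1.le)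
    hqsum hssq
  calc |∑ i, (p i - q i) * t i| / (1 - c) = |∫ x, x ∂μp - ∫ x, x ∂μq| := by
        simp only [hmeanp, hmeanq, ← sub_div, ← Finset.sum_sub_distrib, sub_mul, abs_div,
          abs_of_pos (sub_pos.mpr hc.2)]
    _ ≤ wasserstein1 μp μq := abs_integral_id_sub_le_wasserstein1 μp μq hintp hintq

/-- A lower bound for the first Wasserstein distance between two self-similar
measures for an IFS of N similitudes on the line with common contraction ratio c. -/
theorem wasserstein1_equicontractive_lower_bound
    (N : ℕ) (hN : 1 ≤ N) (c : ℝ) (hc : c ∈ Set.Ioo (0:ℝ) 1) (t : Fin N → ℝ)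
    (p q : Fin N → ℝ)
    (hp : ∀ i, p i ∈ Set.Ioo (0:ℝ) 1) (hpsum : ∑ i, p i = 1)
    (hq : ∀ i, q i ∈ Set.Ioo (0:ℝ) 1) (hqsum : ∑ i, q i = 1)
    (μp : Measure ℝ) (hμp : IsProbabilityMeasure μp)
    (hsuppp : μp ((Set.Icc (0:ℝ) 1)ᶜ) = 0)
    (hssp : μp = ∑ i, ENNReal.ofReal (p i) • μp.map (fun x : ℝ => c * x + t i))
    (μq : Measure ℝ) (hμq : IsProbabilityMeasure μq)
    (hsuppq : μq ((Set.Icc (0:ℝ) 1)ᶜ) = 0)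
    (hssq : μq = ∑ i, ENNReal.ofReal (q i) • μq.map (fun x : ℝ => c * x + t i)) :
    wasserstein1 μp μq ≥ |∑ i, (p i - q i) * t i| / (1 - c) :=
  wasserstein1_equicontractive_lower_bound_general N c hc t p q hp hpsum hq hqsum μp hμp hsuppp hssp
    μq hμq hsuppq hssq
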